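/- Let A be an n×n real symmetric positive definite matrix and Z an n×k real matrix such that A − Z Zᵀ is positive definite. Then the k×k matrix I_k − Zᵀ A⁻¹ Z is symmetric positive definite, and setting V = A⁻¹ Z (I_k − Zᵀ A⁻¹ Z)^{−1/2}, one has (A − Z Zᵀ)⁻¹ − A⁻¹ = V Vᵀ. -/

import Mathlib

/-!
By a Schur complement argument on the block matrix `[[A, Z], [Zᵀ, 1]]`, `S = 1 - Zᵀ A⁻¹ Z` is
positive semidefinite, and `det (A - Z Zᵀ) = det A * det S` makes it invertible, hence positive
definite. The Woodbury identity gives `(A - Z Zᵀ)⁻¹ - A⁻¹ = A⁻¹ Z S⁻¹ Zᵀ A⁻¹`, and writing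
`S⁻¹ = S^{-1/2} S^{-1/2}` with `S^{-1/2}` symmetric splits this as `V Vᵀ`.
-/

open Matrix

section
open scoped ComplexOrder

/-- The square root of a positive semidefinite matrix, as defined in Mathlib (Dec 2024). -/
noncomputable def Matrix.PosSemidef.sqrt {n : Type*} [Fintype n] [DecidableEq n] {𝕜 : Type*}
    [RCLike 𝕜] {A : Matrix n n 𝕜} (hA : A.PosSemidef) : Matrix n n 𝕜 :=
  hA.1.eigenvectorUnitary.1 * diagonal ((↑) ∘ (√·) ∘ hA.1.eigenvalues) *
    (star hA.1.eigenvectorUnitary : Matrix n n 𝕜)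

end

namespace Matrix

section CommRing

variable {m n α : Type*} [Fintype m] [Fintype n] [DecidableEq m] [DecidableEq n] [CommRing α]

theorem det_sub_mul {A : Matrix n n α} (U : Matrix n m α) (V : Matrix m n α) (hA : IsUnit A.det) :
    (A - U * V).det = A.det * (1 - V * A⁻¹ * U).det := by
  simpa [sub_eq_add_neg] using det_add_mul (-U) V hA

theorem inv_sub_mul_eq_add {A : Matrix n n α} (U : Matrix n m α) (V : Matrix m n α)
    (hA : IsUnit A.det) (hS : IsUnit (1 - V * A⁻¹ * U).det) :
    (A - U * V)⁻¹ = A⁻¹ + A⁻¹ * U * (1 - V * A⁻¹ * U)⁻¹ * V * A⁻¹ := by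
  set S := 1 - V * A⁻¹ * U
  have hUS : (A - U * V) * (A⁻¹ * U) = U * S := by
    simp only [S, Matrix.sub_mul, Matrix.mul_sub, mul_nonsing_inv_cancel_left _ _ hA,
      Matrix.mul_one, Matrix.mul_assoc]
  refine inv_eq_right_inv ?_
  calc (A - U * V) * (A⁻¹ + A⁻¹ * U * S⁻¹ * V * A⁻¹)
      = (A - U * V) * A⁻¹ + (A - U * V) * (A⁻¹ * U) * S⁻¹ * V * A⁻¹ := by
        simp only [Matrix.mul_add, Matrix.mul_assoc]
    _ = 1 := by
        rw [hUS, Matrix.mul_assoc U, mul_nonsing_inv _ hS, Matrix.mul_one, Matrix.sub_mul,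
          mul_nonsing_inv _ hA, Matrix.mul_assoc, sub_add_cancel]

end CommRing

section RCLike

open scoped ComplexOrder

variable {m n 𝕜 : Type*} [Fintype m] [Fintype n] [DecidableEq m] [DecidableEq n] [RCLike 𝕜]

theorem PosSemidef.posSemidef_sqrt {A : Matrix n n 𝕜} (hA : A.PosSemidef) :
    hA.sqrt.PosSemidef := by
  unfold sqrt
  have hD := (posSemidef_diagonal_iff (d := ((↑) ∘ (√·) ∘ hA.1.eigenvalues : n → 𝕜))).mpr
    (fun i => by simp [Real.sqrt_nonneg])
  simpa [star_eq_conjTranspose] using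
    hD.mul_mul_conjTranspose_same (hA.1.eigenvectorUnitary : Matrix n n 𝕜)

theorem PosSemidef.sqrt_mul_self {A : Matrix n n 𝕜} (hA : A.PosSemidef) :
    hA.sqrt * hA.sqrt = A := by
  set U : Matrix n n 𝕜 := hA.1.eigenvectorUnitary.1
  set D : Matrix n n 𝕜 := diagonal ((↑) ∘ (√·) ∘ hA.1.eigenvalues)
  have hU : star U * U = 1 := Unitary.coe_star_mul_self _
  have hD : D * D = diagonal (RCLike.ofReal ∘ hA.1.eigenvalues) := by
    rw [diagonal_mul_diagonal]
    congr 1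
    funext i
    simp only [Function.comp_apply, ← RCLike.ofReal_mul,
      Real.mul_self_sqrt (hA.eigenvalues_nonneg i)]
  conv_rhs => rw [hA.1.spectral_theorem, Unitary.conjStarAlgAut_apply]
  calc hA.sqrt * hA.sqrt = U * D * (star U * U) * D * star U := by
        simp only [sqrt, U, D, Matrix.mul_assoc]
    _ = _ := by rw [hU, Matrix.mul_one, Matrix.mul_assoc U D D, hD]

theorem PosSemidef.inv_eq_inv_sqrt_mul_inv_sqrt {A : Matrix n n 𝕜} (hA : A.PosSemidef) :
    A⁻¹ = hA.sqrt⁻¹ * hA.sqrt⁻¹ :=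
  calc A⁻¹ = (hA.sqrt * hA.sqrt)⁻¹ := by rw [hA.sqrt_mul_self]
    _ = hA.sqrt⁻¹ * hA.sqrt⁻¹ := mul_inv_rev _ _

theorem PosDef.one_sub_conjTranspose_mul_inv_mul {A : Matrix n n 𝕜} (hA : A.PosDef)
    {B : Matrix n m 𝕜} (hAB : (A - B * Bᴴ).PosDef) : (1 - Bᴴ * A⁻¹ * B).PosDef := by
  have := hA.isUnit.invertible
  have : Invertible (1 : Matrix m m 𝕜) := invertibleOne
  have hSchur : (1 - Bᴴ * A⁻¹ * B).PosSemidef :=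
    (PosDef.fromBlocks₁₁ B 1 hA).mp <|
      (PosDef.fromBlocks₂₂ A B PosDef.one).mpr (by simpa using hAB.posSemidef)
  have hdet : (A - B * Bᴴ).det = A.det * (1 - Bᴴ * A⁻¹ * B).det :=
    det_sub_mul B Bᴴ hA.det_pos.ne'.isUnit
  refine hSchur.posDef_iff_isUnit.mpr ((isUnit_iff_isUnit_det _).mpr ?_)
  exact isUnit_of_mul_isUnit_right (hdet ▸ hAB.det_pos.ne'.isUnit)

end RCLike

end Matrix

theorem smw_downdate_factor {n k : ℕ} (A : Matrix (Fin n) (Fin n) ℝ) (hA : A.PosDef)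
    (Z : Matrix (Fin n) (Fin k) ℝ) (hAZ : (A - Z * Zᵀ).PosDef) :
    ∃ h : ((1 : Matrix (Fin k) (Fin k) ℝ) - Zᵀ * A⁻¹ * Z).PosDef,
      (A - Z * Zᵀ)⁻¹ - A⁻¹ =
        (A⁻¹ * Z * (h.posSemidef.sqrt)⁻¹) * (A⁻¹ * Z * (h.posSemidef.sqrt)⁻¹)ᵀ := by
  have hS : (1 - Zᵀ * A⁻¹ * Z).PosDef := by
    simpa [conjTranspose_eq_transpose_of_trivial] using
      hA.one_sub_conjTranspose_mul_inv_mul (B := Z)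
        (by simpa [conjTranspose_eq_transpose_of_trivial] using hAZ)
  refine ⟨hS, ?_⟩
  have hAinv : A⁻¹ᵀ = A⁻¹ := (isHermitian_iff_isSymm.mp hA.inv.isHermitian).eq
  have hRinv : hS.posSemidef.sqrt⁻¹ᵀ = hS.posSemidef.sqrt⁻¹ :=
    (isHermitian_iff_isSymm.mp hS.posSemidef.posSemidef_sqrt.isHermitian.inv).eq
  rw [inv_sub_mul_eq_add Z Zᵀ hA.det_pos.ne'.isUnit hS.det_pos.ne'.isUnit, add_sub_cancel_left,
    hS.posSemidef.inv_eq_inv_sqrt_mul_inv_sqrt]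
  simp only [transpose_mul, hAinv, hRinv, Matrix.mul_assoc]
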